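/- arXiv:2307.12305 — 2 statements merged into one kernel-verified Lean document; each statement's English description precedes it below -/
import Mathlib

section
/- In the Edge and Capacity Manipulation Setting, if all tasks have pairwise distinct values, then M_AP is group strategyproof: there is no coalition C of agents and reports (S'_i, c'_i) with S'_i ⊆ T_i and 1 ≤ c'_i ≤ b_i for i ∈ C such that every member's utility under M_AP applied to the deviated profile (others reporting truthfully) is at least its utility under the truthful profile, with strict inequality for at least one member. -/
abbrev Matching (n m : ℕ) := Fin m → Option (Fin n)

def load {n m : ℕ} (μ : Matching n m) (i : Fin n) : ℕ :=
  (Finset.univ.filter fun j => μ j = some i).card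

def assignedSet {n m : ℕ} (μ : Matching n m) (i : Fin n) : Finset (Fin m) :=
  Finset.univ.filter fun j => μ j = some i

def IsBMatching {n m : ℕ} (b : Fin n → ℕ) (E : Fin n → Finset (Fin m))
    (μ : Matching n m) : Prop :=
  (∀ j i, μ j = some i → j ∈ E i) ∧ ∀ i, load μ i ≤ b i

noncomputable def util {n m : ℕ} (q : Fin m → ℝ) (μ : Matching n m) (i : Fin n) : ℝ :=
  ∑ j ∈ assignedSet μ i, q j

noncomputable def welfare {n m : ℕ} (q : Fin m → ℝ) (μ : Matching n m) : ℝ :=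
  ∑ i, util q μ i

/-- Task processing order: decreasing value, ties broken by smaller task index. -/
noncomputable def taskOrder {m : ℕ} (q : Fin m → ℝ) : List (Fin m) :=
  (List.finRange m).mergeSort fun j k => decide (q k < q j ∨ (q j = q k ∧ j ≤ k))

noncomputable def apStep {n m : ℕ} (b : Fin n → ℕ) (E : Fin n → Finset (Fin m))
    (μ : Matching n m) (j : Fin m) : Matching n m :=
  match (List.finRange n).find? (fun i => decide (j ∈ E i ∧ load μ i < b i)) with
  | some i => Function.update μ j (some i)
  | none => μ

/-- The mechanism `M_AP`. -/
noncomputable def MAP {n m : ℕ} (b : Fin n → ℕ) (q : Fin m → ℝ)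
    (E : Fin n → Finset (Fin m)) : Matching n m :=
  (taskOrder q).foldl (apStep b E) (fun _ => none)

/-- The `min k |S|` highest-valued tasks of `S` (ties broken by smaller index). -/
noncomputable def topTasks {m : ℕ} (q : Fin m → ℝ) (S : Finset (Fin m)) (k : ℕ) :
    Finset (Fin m) :=
  (((taskOrder q).filter fun j => decide (j ∈ S)).take k).toFinset

noncomputable def remTasks {n m : ℕ} (b : Fin n → ℕ) (q : Fin m → ℝ)
    (E : Fin n → Finset (Fin m)) : ℕ → Finset (Fin m)
  | 0 => Finset.univ
  | i + 1 =>
    if h : i < n then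
      remTasks b q E i \ topTasks q (E ⟨i, h⟩ ∩ remTasks b q E i) (b ⟨i, h⟩)
    else remTasks b q E i

/-- Agent `i`'s FCFS policy / allocation `B_i`. -/
noncomputable def FCFS {n m : ℕ} (b : Fin n → ℕ) (q : Fin m → ℝ)
    (E : Fin n → Finset (Fin m)) (i : Fin n) : Finset (Fin m) :=
  topTasks q (E i ∩ remTasks b q E i.val) (b i)

lemma taskOrder_perm {m : ℕ} (q : Fin m → ℝ) : (taskOrder q).Perm (List.finRange m) :=
  List.mergeSort_perm _ _

lemma mem_taskOrder {m : ℕ} (q : Fin m → ℝ) (j : Fin m) : j ∈ taskOrder q :=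
  (taskOrder_perm q).mem_iff.2 (List.mem_finRange j)

lemma taskOrder_nodup {m : ℕ} (q : Fin m → ℝ) : (taskOrder q).Nodup :=
  (taskOrder_perm q).nodup_iff.2 (List.nodup_finRange m)

lemma taskOrder_pairwise {m : ℕ} {q : Fin m → ℝ} (hinj : Function.Injective q) :
    (taskOrder q).Pairwise fun j k => q k < q j := by
  have hs : (taskOrder q).Pairwise fun j k => q k < q j ∨ (q j = q k ∧ j ≤ k) := by
    have := List.pairwise_mergeSort
      (le := fun j k : Fin m => decide (q k < q j ∨ (q j = q k ∧ j ≤ k)))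
      (fun a b c hab hbc => ?_) (fun a b => ?_) (List.finRange m)
    · exact (this.imp (fun h => by simpa using of_decide_eq_true h))
    · simp only [decide_eq_true_eq] at *
      rcases hab with h1 | ⟨h1, h1'⟩ <;> rcases hbc with h2 | ⟨h2, h2'⟩
      · exact Or.inl (h2.trans h1)
      · exact Or.inl (h2 ▸ h1)
      · exact Or.inl (h1 ▸ h2)
      · exact Or.inr ⟨h1.trans h2, h1'.trans h2'⟩
    · simp only [Bool.or_eq_true, decide_eq_true_eq]
      rcases lt_trichotomy (q a) (q b) with h | h | h
      · exact Or.inr (Or.inl h)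
      · rcases le_total a b with h' | h'
        · exact Or.inl (Or.inr ⟨h, h'⟩)
        · exact Or.inr (Or.inr ⟨h.symm, h'⟩)
      · exact Or.inl (Or.inl h)
  have hnd : (taskOrder q).Pairwise (· ≠ ·) := taskOrder_nodup q
  exact (hs.and hnd).imp fun ⟨h, hne⟩ => by
    rcases h with h | ⟨h, _⟩
    · exact h
    · exact absurd (hinj h) hne

section ListLemmas
variable {m : ℕ} {q : Fin m → ℝ}

lemma pairwise_gt_nodup {F : List (Fin m)} (hF : F.Pairwise fun j k => q k < q j) :
    F.Nodup :=
  hF.imp fun h => by rintro rfl; exact lt_irrefl _ h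

lemma mem_take_iff_card {F : List (Fin m)}
    (hF : F.Pairwise fun j k => q k < q j) {k : ℕ} {j : Fin m} (hj : j ∈ F) :
    j ∈ F.take k ↔ (F.toFinset.filter fun x => q j < q x).card < k := by
  induction F generalizing k with
  | nil => simp at hj
  | cons a F' IH =>
    have ha : ∀ x ∈ F', q x < q a := fun x hx => (List.pairwise_cons.1 hF).1 x hx
    have hF' : F'.Pairwise fun j k => q k < q j := (List.pairwise_cons.1 hF).2
    have haF' : a ∉ F' := fun h => lt_irrefl _ (ha a h)
    match k with
    | 0 => simp
    | k + 1 =>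
      rw [List.take_succ_cons]
      by_cases hja : j = a
      · subst hja
        have : ((j :: F').toFinset.filter fun x => q j < q x) = ∅ := by
          ext x
          simp only [List.toFinset_cons, Finset.mem_filter, Finset.mem_insert,
            List.mem_toFinset, Finset.notMem_empty, iff_false]
          rintro ⟨hx | hx, hlt⟩
          · exact absurd hlt (by rw [hx]; exact lt_irrefl _)
          · exact absurd (ha x hx) (not_lt.2 hlt.le)
        rw [List.toFinset_cons] at this
        simp [this]
      · have hjF' : j ∈ F' := by rcases List.mem_cons.1 hj with h | h; exact absurd h hja; exact h
        have hqa : q j < q a := ha j hjF'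
        have hfi : ((a :: F').toFinset.filter fun x => q j < q x)
            = insert a (F'.toFinset.filter fun x => q j < q x) := by
          rw [List.toFinset_cons, Finset.filter_insert, if_pos hqa]
        have hanotin : a ∉ (F'.toFinset.filter fun x => q j < q x) := by
          simp [haF']
        rw [hfi, Finset.card_insert_of_notMem hanotin]
        simp only [List.mem_cons, hja, false_or]
        rw [IH hF' hjF']
        omega

lemma take_filter_card {F : List (Fin m)}
    (hF : F.Pairwise fun j k => q k < q j) (k : ℕ) (j : Fin m) :
    ((F.take k).toFinset.filter fun x => q j < q x).card
      = min k ((F.toFinset.filter fun x => q j < q x).card) := by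
  induction F generalizing k with
  | nil => simp
  | cons a F' IH =>
    have ha : ∀ x ∈ F', q x < q a := fun x hx => (List.pairwise_cons.1 hF).1 x hx
    have hF' : F'.Pairwise fun j k => q k < q j := (List.pairwise_cons.1 hF).2
    have haF' : a ∉ F' := fun h => lt_irrefl _ (ha a h)
    match k with
    | 0 => simp
    | k + 1 =>
      rw [List.take_succ_cons, List.toFinset_cons, List.toFinset_cons,
        Finset.filter_insert, Finset.filter_insert]
      by_cases hqa : q j < q a
      · rw [if_pos hqa, if_pos hqa,
          Finset.card_insert_of_notMem (by
            simp only [Finset.mem_filter, List.mem_toFinset, not_and]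
            exact fun h _ => haF' (List.mem_of_mem_take h)),
          Finset.card_insert_of_notMem (by simp [haF']), IH hF']
        omega
      · have hF'e : ∀ (G : List (Fin m)), (∀ x ∈ G, x ∈ F') →
            (G.toFinset.filter fun x => q j < q x) = ∅ := by
          intro G hG
          ext x
          simp only [Finset.mem_filter, List.mem_toFinset, Finset.notMem_empty, iff_false]
          rintro ⟨hx, hlt⟩
          exact absurd ((ha x (hG x hx)).trans_le (not_lt.1 hqa)) (not_lt.2 hlt.le)
        rw [if_neg hqa, if_neg hqa, hF'e (F'.take k) (fun x => List.mem_of_mem_take),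
          hF'e F' (fun x h => h)]
        simp

lemma take_toFinset_card {F : List (Fin m)}
    (hF : F.Pairwise fun j k => q k < q j) (k : ℕ) :
    (F.take k).toFinset.card = min k F.toFinset.card := by
  have hnd := pairwise_gt_nodup hF
  have hnd' : (F.take k).Nodup := (List.take_sublist k F).nodup hnd
  rw [List.toFinset_card_of_nodup hnd', List.toFinset_card_of_nodup hnd, List.length_take]

lemma take_sep {F : List (Fin m)}
    (hF : F.Pairwise fun j k => q k < q j) (k : ℕ) {x a : Fin m}
    (hx : x ∈ F) (hxn : x ∉ F.take k) (hA : a ∈ F.take k) : q x < q a := by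
  have hsplit := List.take_append_drop k F
  have hp : List.Pairwise (fun j k => q k < q j) (F.take k ++ F.drop k) := by
    rw [hsplit]; exact hF
  have hxd : x ∈ F.drop k := by
    rcases List.mem_append.1 (by rw [hsplit]; exact hx) with h | h
    · exact absurd h hxn
    · exact h
  exact (List.pairwise_append.1 hp).2.2 a hA x hxd

end ListLemmas

section TopTasks
variable {m : ℕ} {q : Fin m → ℝ} (hinj : Function.Injective q)
include hinj
set_option linter.unusedSectionVars false

lemma filtered_pairwise (S : Finset (Fin m)) :
    ((taskOrder q).filter fun j => decide (j ∈ S)).Pairwise fun j k => q k < q j :=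
  List.Pairwise.sublist List.filter_sublist (taskOrder_pairwise hinj)

lemma filtered_toFinset (S : Finset (Fin m)) :
    ((taskOrder q).filter fun j => decide (j ∈ S)).toFinset = S := by
  ext x
  simp [List.mem_filter, mem_taskOrder]

lemma topTasks_subset (S : Finset (Fin m)) (k : ℕ) : topTasks q S k ⊆ S := by
  intro x hx
  have := List.mem_of_mem_take (List.mem_toFinset.1 hx)
  simpa using (List.mem_filter.1 this).2

lemma mem_topTasks {S : Finset (Fin m)} {k : ℕ} {j : Fin m} (hj : j ∈ S) :
    j ∈ topTasks q S k ↔ (S.filter fun x => q j < q x).card < k := by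
  have hjF : j ∈ (taskOrder q).filter fun j => decide (j ∈ S) :=
    List.mem_filter.2 ⟨mem_taskOrder q j, by simpa using hj⟩
  rw [topTasks, List.mem_toFinset, mem_take_iff_card (filtered_pairwise hinj S) hjF,
    filtered_toFinset hinj S]

lemma topTasks_filter_card (S : Finset (Fin m)) (k : ℕ) (j : Fin m) :
    ((topTasks q S k).filter fun x => q j < q x).card
      = min k ((S.filter fun x => q j < q x).card) := by
  rw [topTasks, take_filter_card (filtered_pairwise hinj S) k j, filtered_toFinset hinj S]

lemma topTasks_card (S : Finset (Fin m)) (k : ℕ) :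
    (topTasks q S k).card = min k S.card := by
  rw [topTasks, take_toFinset_card (filtered_pairwise hinj S) k, filtered_toFinset hinj S]

lemma topTasks_sep {S : Finset (Fin m)} {k : ℕ} {x a : Fin m}
    (hx : x ∈ S) (hxn : x ∉ topTasks q S k) (hA : a ∈ topTasks q S k) : q x < q a := by
  refine take_sep (filtered_pairwise hinj S) k ?_ ?_ (List.mem_toFinset.1 hA)
  · exact List.mem_filter.2 ⟨mem_taskOrder q x, by simpa using hx⟩
  · exact fun h => hxn (List.mem_toFinset.2 h)

end TopTasks

lemma topTasks_optimal {m : ℕ} {q : Fin m → ℝ} (hinj : Function.Injective q)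
    (hq : ∀ j, 0 < q j) {S X : Finset (Fin m)} {k : ℕ}
    (hX : X ⊆ S) (hcard : X.card ≤ k) (hne : X ≠ topTasks q S k) :
    ∑ j ∈ X, q j < ∑ j ∈ topTasks q S k, q j := by
  set A := topTasks q S k with hA
  have hAS : A ⊆ S := topTasks_subset hinj S k
  have hsum : ∀ Y Z : Finset (Fin m), ∑ j ∈ Y, q j = ∑ j ∈ Y ∩ Z, q j + ∑ j ∈ Y \ Z, q j :=
    fun Y Z => (Finset.sum_inter_add_sum_sdiff Y Z q).symm
  rw [hsum X A, hsum A X, Finset.inter_comm A X]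
  have key : ∑ j ∈ X \ A, q j < ∑ j ∈ A \ X, q j := by
    rcases Finset.eq_empty_or_nonempty (X \ A) with hXA | hXA
    · -- X ⊆ A strictly
      have hXsub : X ⊆ A := by
        intro x hx
        by_contra hxa
        exact (Finset.notMem_empty x) (hXA ▸ Finset.mem_sdiff.2 ⟨hx, hxa⟩)
      have hAX : (A \ X).Nonempty := by
        rcases Finset.exists_of_ssubset (hXsub.ssubset_of_ne hne) with ⟨a, ha, hax⟩
        exact ⟨a, Finset.mem_sdiff.2 ⟨ha, hax⟩⟩
      rw [hXA, Finset.sum_empty]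
      exact Finset.sum_pos (fun j _ => hq j) hAX
    · -- card comparison
      have hcardA : A.card = min k S.card := topTasks_card hinj S k
      have hSk : ¬ S.card ≤ k := by
        intro hSk
        have : A = S := Finset.eq_of_subset_of_card_le hAS
          (by rw [hcardA]; omega)
        rcases hXA with ⟨x, hx⟩
        rw [Finset.mem_sdiff, this] at hx
        exact hx.2 (hX hx.1)
      have hAk : A.card = k := by omega
      have hcards : (X \ A).card ≤ (A \ X).card := by
        have h1 := Finset.card_sdiff_add_card_inter X A
        have h2 := Finset.card_sdiff_add_card_inter A X
        rw [Finset.inter_comm A X] at h2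
        omega
      obtain ⟨a₀, ha₀, hmin⟩ := Finset.exists_min_image (A \ X) q
        (Finset.card_pos.1 (lt_of_lt_of_le (Finset.card_pos.2 hXA) hcards))
      have hlt : ∀ x ∈ X \ A, q x < q a₀ := by
        intro x hx
        rw [Finset.mem_sdiff] at hx ha₀
        exact topTasks_sep hinj (hX hx.1) hx.2 ha₀.1
      calc ∑ j ∈ X \ A, q j < ∑ _j ∈ X \ A, q a₀ :=
            Finset.sum_lt_sum_of_nonempty hXA hlt
        _ = (X \ A).card • q a₀ := by rw [Finset.sum_const]
        _ ≤ (A \ X).card • q a₀ := by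
            have : (0:ℝ) ≤ q a₀ := (hq a₀).le
            exact nsmul_le_nsmul_left this hcards |>.trans_eq rfl |>.trans_eq rfl
        _ ≤ ∑ j ∈ A \ X, q j := Finset.card_nsmul_le_sum _ _ _ (fun x hx => hmin x hx)
  linarith

/-- helper: `find?` on `finRange` yields the least index satisfying the predicate. -/
lemma find?_finRange_least {n : ℕ} {p : Fin n → Bool} {i₀ : Fin n}
    (h : (List.finRange n).find? p = some i₀) :
    p i₀ = true ∧ ∀ i : Fin n, i < i₀ → p i = false := by
  refine ⟨List.find?_some h, ?_⟩
  have key : ∀ (l : List (Fin n)), l.Pairwise (· < ·) → l.find? p = some i₀ →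
      ∀ i ∈ l, i < i₀ → p i = false := by
    intro l hl hfind i hi hlt
    induction l with
    | nil => simp at hfind
    | cons a l' IH =>
      rw [List.find?_cons] at hfind
      rcases hpa : p a with _ | _
      · rw [hpa] at hfind
        simp only [cond_false] at hfind
        rcases List.mem_cons.1 hi with rfl | hi'
        · exact hpa
        · exact IH (List.pairwise_cons.1 hl).2 hfind hi'
      · rw [hpa] at hfind
        simp only [cond_true, Option.some.injEq] at hfind
        subst hfind
        rcases List.mem_cons.1 hi with rfl | hi'
        · exact absurd hlt (lt_irrefl _)
        · exact absurd hlt (not_lt.2 ((List.pairwise_cons.1 hl).1 i hi').le)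
  exact fun i => key _ (List.pairwise_lt_finRange n) h i (List.mem_finRange i)

section MapEqFcfs
variable {n m : ℕ} {b : Fin n → ℕ} {q : Fin m → ℝ} {E : Fin n → Finset (Fin m)}
  (hinj : Function.Injective q)
include hinj
set_option linter.unusedSectionVars false

lemma FCFS_subset (i : Fin n) : FCFS b q E i ⊆ E i ∩ remTasks b q E i.val :=
  topTasks_subset hinj _ _

lemma mem_remTasks (k : ℕ) (j : Fin m) :
    j ∈ remTasks b q E k ↔ ∀ i : Fin n, (i : ℕ) < k → j ∉ FCFS b q E i := by
  induction k with
  | zero => simp [remTasks]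
  | succ k IH =>
    rw [remTasks]
    by_cases h : k < n
    · rw [dif_pos h, Finset.mem_sdiff, IH]
      constructor
      · rintro ⟨h1, h2⟩ i hik
        rcases Nat.lt_succ_iff_lt_or_eq.1 hik with hik' | hik'
        · exact h1 i hik'
        · have : i = ⟨k, h⟩ := Fin.ext hik'
          rw [this]; exact h2
      · intro hall
        exact ⟨fun i hik => hall i (Nat.lt_succ_of_lt hik),
          hall ⟨k, h⟩ (Nat.lt_succ_self k)⟩
    · rw [dif_neg h, IH]
      constructor
      · intro h1 i hik
        exact h1 i (lt_of_lt_of_le i.isLt (not_lt.1 h))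
      · intro h1 i hik
        exact h1 i (Nat.lt_succ_of_lt hik)

lemma FCFS_disjoint {i i' : Fin n} (hne : i ≠ i') :
    Disjoint (FCFS b q E i) (FCFS b q E i') := by
  have key : ∀ {a c : Fin n}, a < c → Disjoint (FCFS b q E a) (FCFS b q E c) := by
    intro a c hac
    rw [Finset.disjoint_left]
    intro j hja hjc
    have := (Finset.mem_inter.1 (FCFS_subset hinj c hjc)).2
    exact ((mem_remTasks hinj c.val j).1 this) a hac hja
  rcases lt_or_gt_of_ne hne with h | h
  · exact key h
  · exact (key h).symm

end MapEqFcfs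

/-- Invariant: after processing prefix `P`, assignments agree with FCFS on `P`. -/
def InvP {n m : ℕ} (b : Fin n → ℕ) (q : Fin m → ℝ) (E : Fin n → Finset (Fin m))
    (μ : Matching n m) (P : List (Fin m)) : Prop :=
  ∀ j i, μ j = some i ↔ j ∈ P ∧ j ∈ FCFS b q E i

section Invariant
variable {n m : ℕ} {b : Fin n → ℕ} {q : Fin m → ℝ} {E : Fin n → Finset (Fin m)}
  (hinj : Function.Injective q)
include hinj
set_option linter.unusedSectionVars false

lemma apStep_inv {μ : Matching n m} {P rest' : List (Fin m)} {j : Fin m}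
    (hsplit : P ++ j :: rest' = taskOrder q)
    (hInv : InvP b q E μ P) : InvP b q E (apStep b E μ j) (P ++ [j]) := by
  have hL : (P ++ j :: rest').Pairwise fun j k => q k < q j := by
    rw [hsplit]; exact taskOrder_pairwise hinj
  have hpa := List.pairwise_append.1 hL
  have hP : ∀ j' : Fin m, j' ∈ P ↔ q j < q j' := by
    intro j'
    constructor
    · exact fun h => hpa.2.2 j' h j (List.mem_cons_self (a := j) (l := rest'))
    · intro hlt
      have hj'L : j' ∈ P ++ j :: rest' := by rw [hsplit]; exact mem_taskOrder q j'
      rcases List.mem_append.1 hj'L with h | h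
      · exact h
      · rcases List.mem_cons.1 h with rfl | h'
        · exact absurd hlt (lt_irrefl _)
        · exact absurd ((List.pairwise_cons.1 hpa.2.1).1 j' h') (not_lt.2 hlt.le)
  have hjP : j ∉ P := fun h => lt_irrefl _ ((hP j).1 h)
  have hload : ∀ i, load μ i = ((FCFS b q E i).filter fun x => q j < q x).card := by
    intro i
    unfold load
    congr 1
    ext x
    simp only [Finset.mem_filter, Finset.mem_univ, true_and, hInv x i, hP x]
    exact and_comm
  have hEc : ∀ i, j ∈ FCFS b q E i → j ∈ E i :=
    fun i h => (Finset.mem_inter.1 (FCFS_subset hinj i h)).1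
  have hfull : ∀ i, j ∈ FCFS b q E i → load μ i < b i := by
    intro i hji
    have hsub : ((FCFS b q E i).filter fun x => q j < q x) ⊆ (FCFS b q E i).erase j := by
      intro x hx
      rw [Finset.mem_filter] at hx
      refine Finset.mem_erase.2 ⟨?_, hx.1⟩
      rintro rfl
      exact lt_irrefl _ hx.2
    have h1 : ((FCFS b q E i).filter fun x => q j < q x).card ≤ (FCFS b q E i).card - 1 := by
      have := Finset.card_le_card hsub
      rwa [Finset.card_erase_of_mem hji] at this
    have h2 : (FCFS b q E i).card ≤ b i := by
      rw [FCFS, topTasks_card hinj]; omega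
    have h3 : 1 ≤ (FCFS b q E i).card := Finset.card_pos.2 ⟨j, hji⟩
    rw [hload i]
    omega
  rcases hfind : (List.finRange n).find? (fun i => decide (j ∈ E i ∧ load μ i < b i))
    with _ | i₀
  · have happ : apStep b E μ j = μ := by unfold apStep; rw [hfind]
    have hnone : ∀ i : Fin n, ¬(j ∈ E i ∧ load μ i < b i) := by
      intro i
      have := List.find?_eq_none.1 hfind i (List.mem_finRange i)
      simpa using this
    have hnotFc : ∀ i, j ∉ FCFS b q E i :=
      fun i hji => hnone i ⟨hEc i hji, hfull i hji⟩
    rw [happ]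
    intro j' i
    rw [hInv j' i, List.mem_append, List.mem_singleton]
    constructor
    · rintro ⟨h1, h2⟩; exact ⟨Or.inl h1, h2⟩
    · rintro ⟨h1 | rfl, h2⟩
      · exact ⟨h1, h2⟩
      · exact absurd h2 (hnotFc i)
  · have happ : apStep b E μ j = Function.update μ j (some i₀) := by
      unfold apStep; rw [hfind]
    obtain ⟨hp₀', hleast'⟩ := find?_finRange_least hfind
    have hp₀ : j ∈ E i₀ ∧ load μ i₀ < b i₀ := by simpa using hp₀'
    have hnlt : ∀ i : Fin n, i < i₀ → ¬(j ∈ E i ∧ load μ i < b i) := by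
      intro i hi
      have := hleast' i hi
      simpa using this
    have hjrem : j ∈ remTasks b q E i₀.val := by
      rw [mem_remTasks hinj]
      intro i hi hjFc
      exact hnlt i hi ⟨hEc i hjFc, hfull i hjFc⟩
    have hjFc : j ∈ FCFS b q E i₀ := by
      have hset : j ∈ E i₀ ∩ remTasks b q E i₀.val := Finset.mem_inter.2 ⟨hp₀.1, hjrem⟩
      rw [FCFS, mem_topTasks hinj hset]
      have := hp₀.2
      rw [hload i₀, FCFS, topTasks_filter_card hinj] at this
      omega
    rw [happ]
    intro j' i
    by_cases hj' : j' = j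
    · subst hj'
      rw [Function.update_self]
      constructor
      · intro h
        have : i₀ = i := by injection h
        subst this
        exact ⟨List.mem_append.2 (Or.inr (List.mem_singleton.2 rfl)), hjFc⟩
      · rintro ⟨_, h2⟩
        have : i = i₀ := by
          by_contra hne
          exact Finset.disjoint_left.1 (FCFS_disjoint hinj hne) h2 hjFc
        rw [this]
    · rw [Function.update_of_ne hj', hInv j' i, List.mem_append, List.mem_singleton]
      constructor
      · rintro ⟨h1, h2⟩; exact ⟨Or.inl h1, h2⟩
      · rintro ⟨h1 | h1, h2⟩
        · exact ⟨h1, h2⟩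
        · exact absurd h1 hj'

lemma assignedSet_MAP (i : Fin n) : assignedSet (MAP b q E) i = FCFS b q E i := by
  have main : ∀ (rest P : List (Fin m)) (μ : Matching n m),
      P ++ rest = taskOrder q → InvP b q E μ P →
      InvP b q E (rest.foldl (apStep b E) μ) (P ++ rest) := by
    intro rest
    induction rest with
    | nil => intro P μ _ hI; simpa using hI
    | cons j rest' IH =>
      intro P μ h hI
      have h2 : (P ++ [j]) ++ rest' = taskOrder q := by rw [List.append_assoc]; simpa using h
      have := IH (P ++ [j]) (apStep b E μ j) h2 (apStep_inv hinj h hI)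
      rw [List.append_assoc] at this
      simpa using this
  have hinit : InvP b q E (fun _ => none) [] := by
    intro j i
    simp
  have hfin := main (taskOrder q) [] (fun _ => none) rfl hinit
  ext j
  rw [assignedSet, Finset.mem_filter]
  have := hfin j i
  simp only [List.nil_append] at this
  rw [MAP] at *
  simp [this, mem_taskOrder]

lemma util_MAP (i : Fin n) : util q (MAP b q E) i = ∑ j ∈ FCFS b q E i, q j := by
  rw [util, assignedSet_MAP hinj]

end Invariant

/-- In the ECMS, if all tasks have pairwise distinct values, `M_AP` is group
strategyproof: no coalition can jointly hide edges and lower capacities so that no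
member is worse off and some member is strictly better off. -/
theorem MAP_ECMS_group_strategyproof (n m : ℕ) (b : Fin n → ℕ) (q : Fin m → ℝ)
    (hb : ∀ i, 1 ≤ b i) (hq : ∀ j, 0 < q j) (hinj : Function.Injective q)
    (T : Fin n → Finset (Fin m)) :
    ¬ ∃ (C : Finset (Fin n)) (S' : Fin n → Finset (Fin m)) (c' : Fin n → ℕ),
        (∀ i ∈ C, (S' i).Nonempty ∧ S' i ⊆ T i ∧ 1 ≤ c' i ∧ c' i ≤ b i) ∧
        (∀ i ∈ C,
          util q (MAP b q T) i ≤
            util q (MAP (fun k => if k ∈ C then c' k else b k) q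
              (fun k => if k ∈ C then S' k else T k)) i) ∧
        (∃ i ∈ C,
          util q (MAP b q T) i <
            util q (MAP (fun k => if k ∈ C then c' k else b k) q
              (fun k => if k ∈ C then S' k else T k)) i) := by
  rintro ⟨C, S', c', hC, hweak, i₀, hi₀C, hstrict⟩
  set b' : Fin n → ℕ := fun k => if k ∈ C then c' k else b k with hb'
  set E' : Fin n → Finset (Fin m) := fun k => if k ∈ C then S' k else T k with hE'
  have claim : ∀ k : ℕ, remTasks b' q E' k = remTasks b q T k ∧
      ∀ i : Fin n, (i : ℕ) < k → FCFS b' q E' i = FCFS b q T i := by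
    intro k
    induction k with
    | zero =>
      exact ⟨by simp [remTasks], fun i hi => absurd hi (Nat.not_lt_zero _)⟩
    | succ k IH =>
      obtain ⟨hrem, hFcs⟩ := IH
      by_cases h : k < n
      · have hFc' : topTasks q (E' ⟨k, h⟩ ∩ remTasks b q T k) (b' ⟨k, h⟩)
            = topTasks q (T ⟨k, h⟩ ∩ remTasks b q T k) (b ⟨k, h⟩) := by
          by_cases hiC : (⟨k, h⟩ : Fin n) ∈ C
          · have hE'i : E' ⟨k, h⟩ = S' ⟨k, h⟩ := by rw [hE']; simp [hiC]
            have hb'i : b' ⟨k, h⟩ = c' ⟨k, h⟩ := by rw [hb']; simp [hiC]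
            rw [hE'i, hb'i]
            obtain ⟨hne, hsub, hc1, hcb⟩ := hC ⟨k, h⟩ hiC
            have hXsub : topTasks q (S' ⟨k, h⟩ ∩ remTasks b q T k) (c' ⟨k, h⟩)
                ⊆ T ⟨k, h⟩ ∩ remTasks b q T k :=
              (topTasks_subset hinj _ _).trans
                (Finset.inter_subset_inter hsub (Finset.Subset.refl _))
            have hXcard : (topTasks q (S' ⟨k, h⟩ ∩ remTasks b q T k) (c' ⟨k, h⟩)).card
                ≤ b ⟨k, h⟩ := by
              rw [topTasks_card hinj]
              omega
            by_contra hne3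
            have hlt := topTasks_optimal hinj hq hXsub hXcard hne3
            have hw := hweak ⟨k, h⟩ hiC
            rw [util_MAP hinj, util_MAP hinj] at hw
            have hFCl : FCFS b' q E' ⟨k, h⟩
                = topTasks q (S' ⟨k, h⟩ ∩ remTasks b q T k) (c' ⟨k, h⟩) := by
              show topTasks q (E' ⟨k, h⟩ ∩ remTasks b' q E' k) (b' ⟨k, h⟩) = _
              rw [hrem, hE'i, hb'i]
            have hFCr : FCFS b q T ⟨k, h⟩
                = topTasks q (T ⟨k, h⟩ ∩ remTasks b q T k) (b ⟨k, h⟩) := rfl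
            rw [hFCl, hFCr] at hw
            linarith
          · have hE'i : E' ⟨k, h⟩ = T ⟨k, h⟩ := by rw [hE']; simp [hiC]
            have hb'i : b' ⟨k, h⟩ = b ⟨k, h⟩ := by rw [hb']; simp [hiC]
            rw [hE'i, hb'i]
        constructor
        · show remTasks b' q E' (k+1) = remTasks b q T (k+1)
          rw [remTasks, remTasks, dif_pos h, dif_pos h, hrem, hFc']
        · intro i' hi'
          rcases Nat.lt_succ_iff_lt_or_eq.1 hi' with h' | h'
          · exact hFcs i' h'
          · have hieq : i' = ⟨k, h⟩ := Fin.ext h'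
            rw [hieq]
            show topTasks q (E' ⟨k, h⟩ ∩ remTasks b' q E' k) (b' ⟨k, h⟩)
              = topTasks q (T ⟨k, h⟩ ∩ remTasks b q T k) (b ⟨k, h⟩)
            rw [hrem]
            exact hFc'
      · constructor
        · rw [remTasks, remTasks, dif_neg h, dif_neg h, hrem]
        · intro i' hi'
          exact hFcs i' (lt_of_lt_of_le i'.isLt (not_lt.1 h))
  have hall : ∀ i : Fin n, FCFS b' q E' i = FCFS b q T i :=
    fun i => (claim n).2 i i.isLt
  rw [util_MAP hinj, util_MAP hinj, hall i₀] at hstrict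
  exact lt_irrefl _ hstrict
end

section
/- In the Edge and Capacity Manipulation Setting, every deterministic mechanism has Price of Anarchy at least 2: for every deterministic ECMS mechanism M defined on all MVbM instances and every ε > 0, there exist an instance with true edge profile (T_1,…,T_n) and true capacities (b_1,…,b_n) and a pure Nash equilibrium report profile ((S_1,c_1),…,(S_n,c_n)) of M such that w(μ*) ≥ (2 − ε)·w(M((S_1,c_1),…,(S_n,c_n))), where μ* is a maximum vertex-weighted b-matching for the true instance. -/
/-- A deterministic mechanism in the Edge and Capacity Manipulation Setting: for every
numbers of agents and tasks and task values, it maps reported edge sets and reported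
capacities to a matching. -/
def ECMechanism := ∀ (n m : ℕ), (Fin m → ℝ) →
    (Fin n → Finset (Fin m)) → (Fin n → ℕ) → Matching n m

/-- The mechanism always returns a matching feasible with respect to the reported
edges and reported capacities. -/
def ECFeasible (M : ECMechanism) : Prop :=
  ∀ (n m : ℕ) (q : Fin m → ℝ) (S : Fin n → Finset (Fin m)) (c : Fin n → ℕ),
    IsBMatching c S (M n m q S c)

/-- A valid MVbM instance: every capacity is at least `1` and every task value is
positive. -/
def ValidInstance {n m : ℕ} (b : Fin n → ℕ) (q : Fin m → ℝ) : Prop :=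
  (∀ i, 1 ≤ b i) ∧ (∀ j, 0 < q j)

/-- `(S, c)` is a profile of admissible ECMS reports for true edges `T` and true
capacities `b`. -/
def ECValidReports {n m : ℕ} (T : Fin n → Finset (Fin m)) (b : Fin n → ℕ)
    (S : Fin n → Finset (Fin m)) (c : Fin n → ℕ) : Prop :=
  ∀ i, (S i).Nonempty ∧ S i ⊆ T i ∧ 1 ≤ c i ∧ c i ≤ b i

/-- `(S, c)` is a pure Nash equilibrium of the ECMS mechanism `M` when the true edge
profile is `T` and the true capacities are `b`: no agent has an admissible unilateral
deviation giving it strictly larger utility. -/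
def ECNashEq (M : ECMechanism) {n m : ℕ} (b : Fin n → ℕ) (q : Fin m → ℝ)
    (T : Fin n → Finset (Fin m)) (S : Fin n → Finset (Fin m)) (c : Fin n → ℕ) : Prop :=
  ∀ (i : Fin n) (S' : Finset (Fin m)) (c' : ℕ),
    S'.Nonempty → S' ⊆ T i → 1 ≤ c' → c' ≤ b i →
    util q (M n m q (Function.update S i S') (Function.update c i c')) i ≤
      util q (M n m q S c) i

lemma welfare_eq {n m : ℕ} (q : Fin m → ℝ) (μ : Matching n m) :
    welfare q μ = ∑ j ∈ Finset.univ.filter (fun j => (μ j).isSome), q j := by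
  classical
  unfold welfare util assignedSet
  simp_rw [Finset.sum_filter]
  rw [Finset.sum_comm]
  refine Finset.sum_congr rfl fun j _ => ?_
  cases hj : μ j with
  | none => simp [hj]
  | some i0 => simp [hj, eq_comm, Finset.sum_ite_eq]

lemma case_won (M : ECMechanism) (hF : ECFeasible M) (ε : ℝ) (hε : 0 < ε)
    (a o : Fin 2) (hao : o ≠ a)
    (h0 : M 2 2 (fun _ => 1) (fun _ => {0}) (fun _ => 1) 0 = some a)
    (h1 : M 2 2 (fun _ => 1) (fun _ => {0}) (fun _ => 1) 1 = none) :
    ∃ (n m : ℕ) (b : Fin n → ℕ) (q : Fin m → ℝ) (T : Fin n → Finset (Fin m))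
      (S : Fin n → Finset (Fin m)) (c : Fin n → ℕ) (μ : Matching n m),
      ValidInstance b q ∧ ECValidReports T b S c ∧ ECNashEq M b q T S c ∧
      IsBMatching b T μ ∧
      (∀ μ' : Matching n m, IsBMatching b T μ' → welfare q μ' ≤ welfare q μ) ∧
      welfare q μ ≥ (2 - ε) * welfare q (M n m q S c) := by
  classical
  set q : Fin 2 → ℝ := fun _ => 1 with hq
  set S : Fin 2 → Finset (Fin 2) := fun _ => {0} with hS
  set c : Fin 2 → ℕ := fun _ => 1 with hc
  set T : Fin 2 → Finset (Fin 2) := fun i => if i = a then {0, 1} else {0} with hT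
  set μ : Matching 2 2 := fun j => if j = 0 then some o else some a with hμ
  set μ0 : Matching 2 2 := M 2 2 q S c with hμ0
  refine ⟨2, 2, fun _ => 1, q, T, S, c, μ, ⟨fun _ => le_refl 1, fun _ => one_pos⟩, ?_, ?_, ?_, ?_, ?_⟩
  · -- valid reports
    intro i
    refine ⟨⟨0, by simp [hS]⟩, ?_, le_refl 1, le_refl 1⟩
    intro x hx
    simp only [hS, Finset.mem_singleton] at hx
    subst hx
    by_cases hia : i = a <;> simp [hT, hia]
  · -- Nash equilibrium
    intro i S' c' hne hsub hc1 hc2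
    have hc' : c' = 1 := le_antisymm hc2 hc1
    subst hc'
    by_cases hia : i = a
    · -- agent a: its current utility is 1, max possible with capacity 1
      subst hia
      have hcur : assignedSet μ0 i = {0} := by
        ext j
        fin_cases j <;> simp [assignedSet, h0, h1, ← hμ0]
      have hcurval : util q μ0 i = 1 := by
        rw [util, hcur]; simp [hq]
      rw [hcurval]
      set μ1 := M 2 2 q (Function.update S i S') (Function.update c i 1) with hμ1
      have hload : load μ1 i ≤ 1 := by
        have h := (hF 2 2 q (Function.update S i S') (Function.update c i 1)).2 i
        rwa [Function.update_self] at h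
      have hcard : util q μ1 i = ((assignedSet μ1 i).card : ℝ) := by
        rw [util]; simp [hq]
      rw [hcard]
      exact_mod_cast hload
    · -- other agent: the deviation is no deviation at all
      have hS' : S' = {0} := by
        have hsub' : S' ⊆ {0} := hsub.trans (show T i ⊆ {0} by simp [hT, hia])
        rcases Finset.subset_singleton_iff.mp hsub' with h | h
        · exact absurd h (Finset.nonempty_iff_ne_empty.mp hne)
        · exact h
      have e1 : Function.update S i S' = S := by
        rw [hS']; exact Function.update_eq_self i S
      have e2 : Function.update c i (1 : ℕ) = c := Function.update_eq_self i c
      rw [e1, e2]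
  · -- μ is a feasible b-matching for true instance
    constructor
    · intro j i hj
      fin_cases j <;> simp [hμ] at hj <;> subst hj
      · simp [hT, hao]
      · simp [hT]
    · intro i
      rw [load, Finset.card_le_one]
      intro x hx y hy
      have hx' := (Finset.mem_filter.mp hx).2
      have hy' := (Finset.mem_filter.mp hy).2
      rw [hμ] at hx' hy'
      fin_cases x <;> fin_cases y <;> simp_all
  · -- maximality
    intro μ' _
    rw [welfare_eq, welfare_eq]
    have hμuniv : (Finset.univ.filter fun j => (μ j).isSome) = Finset.univ := by
      ext j; fin_cases j <;> simp [hμ]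
    rw [hμuniv]
    apply Finset.sum_le_sum_of_subset_of_nonneg (Finset.filter_subset _ _)
    intro j _ _
    simp [hq]
  · -- welfare comparison
    have hw0 : welfare q μ0 = 1 := by
      rw [welfare_eq]
      have : (Finset.univ.filter fun j => (μ0 j).isSome) = {0} := by
        ext j; fin_cases j <;> simp [← hμ0, h0, h1]
      rw [this]; simp [hq]
    have hw : welfare q μ = 2 := by
      rw [welfare_eq]
      have : (Finset.univ.filter fun j => (μ j).isSome) = Finset.univ := by
        ext j; fin_cases j <;> simp [hμ]
      rw [this]; simp [hq, Fin.sum_univ_two]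
    rw [← hμ0, hw0, hw]
    linarith

lemma case_none (M : ECMechanism) (hF : ECFeasible M) (ε : ℝ) (hε : 0 < ε)
    (h0 : M 2 2 (fun _ => 1) (fun _ => {0}) (fun _ => 1) 0 = none)
    (h1 : M 2 2 (fun _ => 1) (fun _ => {0}) (fun _ => 1) 1 = none) :
    ∃ (n m : ℕ) (b : Fin n → ℕ) (q : Fin m → ℝ) (T : Fin n → Finset (Fin m))
      (S : Fin n → Finset (Fin m)) (c : Fin n → ℕ) (μ : Matching n m),
      ValidInstance b q ∧ ECValidReports T b S c ∧ ECNashEq M b q T S c ∧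
      IsBMatching b T μ ∧
      (∀ μ' : Matching n m, IsBMatching b T μ' → welfare q μ' ≤ welfare q μ) ∧
      welfare q μ ≥ (2 - ε) * welfare q (M n m q S c) := by
  classical
  set q : Fin 2 → ℝ := fun _ => 1 with hq
  set S : Fin 2 → Finset (Fin 2) := fun _ => {0} with hS
  set c : Fin 2 → ℕ := fun _ => 1 with hc
  set μ : Matching 2 2 := fun j => if j = 0 then some 0 else none with hμ
  set μ0 : Matching 2 2 := M 2 2 q S c with hμ0
  refine ⟨2, 2, fun _ => 1, q, S, S, c, μ, ⟨fun _ => le_refl 1, fun _ => one_pos⟩, ?_, ?_, ?_, ?_, ?_⟩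
  · intro i
    exact ⟨⟨0, by simp [hS]⟩, subset_rfl, le_refl 1, le_refl 1⟩
  · intro i S' c' hne hsub hc1 hc2
    have hc' : c' = 1 := le_antisymm hc2 hc1
    have hS' : S' = {0} := by
      have hsub' : S' ⊆ {0} := hsub.trans (show S i ⊆ {0} by simp [hS])
      rcases Finset.subset_singleton_iff.mp hsub' with h | h
      · exact absurd h (Finset.nonempty_iff_ne_empty.mp hne)
      · exact h
    have e1 : Function.update S i S' = S := by
      rw [hS']; exact Function.update_eq_self i S
    have e2 : Function.update c i c' = c := by
      rw [hc']; exact Function.update_eq_self i c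
    rw [e1, e2]
  · constructor
    · intro j i hj
      rw [hμ] at hj
      fin_cases j
      · simp at hj
        simp [hS, ← hj]
      · simp at hj
    · intro i
      rw [load, Finset.card_le_one]
      intro x hx y hy
      have hx' := (Finset.mem_filter.mp hx).2
      have hy' := (Finset.mem_filter.mp hy).2
      rw [hμ] at hx' hy'
      fin_cases x <;> fin_cases y <;> simp_all
  · intro μ' hμ'
    have h1' : μ' 1 = none := by
      cases hj2 : μ' 1 with
      | none => rfl
      | some i => exact absurd (hμ'.1 1 i hj2) (by simp [hS])
    rw [welfare_eq, welfare_eq]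
    have hw : (Finset.univ.filter fun j => (μ j).isSome) = {0} := by
      ext j; fin_cases j <;> simp [hμ]
    have hw' : (Finset.univ.filter fun j => (μ' j).isSome) ⊆ {0} := by
      intro j hj
      have hj' := (Finset.mem_filter.mp hj).2
      fin_cases j
      · simp
      · exact absurd hj' (show ¬(μ' 1).isSome = true by rw [h1']; simp)
    rw [hw]
    exact Finset.sum_le_sum_of_subset_of_nonneg hw' (fun j _ _ => by simp [hq])
  · have hw0 : welfare q μ0 = 0 := by
      rw [welfare_eq]
      have : (Finset.univ.filter fun j => (μ0 j).isSome) = ∅ := by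
        ext j; fin_cases j <;> simp [← hμ0, h0, h1]
      rw [this]; simp
    have hw : welfare q μ = 1 := by
      rw [welfare_eq]
      have : (Finset.univ.filter fun j => (μ j).isSome) = {0} := by
        ext j; fin_cases j <;> simp [hμ]
      rw [this]; simp [hq]
    rw [← hμ0, hw0, hw, mul_zero]
    exact zero_le_one

/-- In the ECMS, every deterministic mechanism has Price of Anarchy at least `2`. -/
theorem ECMS_PoA_at_least_two (M : ECMechanism) (hF : ECFeasible M)
    (ε : ℝ) (hε : 0 < ε) :
    ∃ (n m : ℕ) (b : Fin n → ℕ) (q : Fin m → ℝ) (T : Fin n → Finset (Fin m))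
      (S : Fin n → Finset (Fin m)) (c : Fin n → ℕ) (μ : Matching n m),
      ValidInstance b q ∧ ECValidReports T b S c ∧ ECNashEq M b q T S c ∧
      IsBMatching b T μ ∧
      (∀ μ' : Matching n m, IsBMatching b T μ' → welfare q μ' ≤ welfare q μ) ∧
      welfare q μ ≥ (2 - ε) * welfare q (M n m q S c) := by
  classical
  have h1 : M 2 2 (fun _ => 1) (fun _ => {0}) (fun _ => 1) 1 = none := by
    cases hj : M 2 2 (fun _ => (1:ℝ)) (fun _ => ({0} : Finset (Fin 2))) (fun _ => 1) 1 with
    | none => rfl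
    | some i => exact absurd ((hF 2 2 _ _ _).1 1 i hj) (by simp)
  cases h0 : M 2 2 (fun _ => (1:ℝ)) (fun _ => ({0} : Finset (Fin 2))) (fun _ => 1) 0 with
  | none => exact case_none M hF ε hε h0 h1
  | some a =>
    refine case_won M hF ε hε a (a + 1) ?_ h0 h1
    intro h
    have h2 := congrArg Fin.val h
    have h3 := a.isLt
    simp [Fin.val_add] at h2
    omega
end
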